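/- arXiv:2403.06957 — 2 statements merged into one kernel-verified Lean document; each statement's English description precedes it below -/
import Mathlib

section
/- Every ideal I of the monoid IOF_n^par is of the form I = I_{P*} for some admissible set P* ⊆ P(n̄); indeed P* = {dom(a) : a ∈ I} is admissible and I = I_{P*}. -/
namespace IOFpar

/-- A partial injection on the chain `{1, …, n}`: a partial function with domain and
image contained in `{1, …, n}` that is injective where defined. -/
structure PInj (n : ℕ) where
  f : ℕ → Option ℕ
  mem_bounds : ∀ ⦃x y : ℕ⦄, f x = some y → x ∈ Finset.Icc 1 n ∧ y ∈ Finset.Icc 1 n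
  inj : ∀ ⦃x₁ x₂ y : ℕ⦄, f x₁ = some y → f x₂ = some y → x₁ = x₂

/-- The domain of a partial injection. -/
def PInj.dom {n : ℕ} (α : PInj n) : Finset ℕ :=
  (Finset.Icc 1 n).filter fun x => (α.f x).isSome

open Classical in
/-- The image of a partial injection. -/
noncomputable def PInj.im {n : ℕ} (α : PInj n) : Finset ℕ :=
  (Finset.Icc 1 n).filter fun y => ∃ x, α.f x = some y

/-- The rank of a partial injection: the size of its domain. -/
def PInj.rank {n : ℕ} (α : PInj n) : ℕ := α.dom.card

/-- The value of `α` at `x` (with junk value `0` outside the domain). -/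
def PInj.app {n : ℕ} (α : PInj n) (x : ℕ) : ℕ := (α.f x).getD 0

/-- Composition of partial injections: `α.comp β` applies `α` first, then `β`
(so it corresponds to the product `αβ` with arguments written on the left). -/
def PInj.comp {n : ℕ} (α β : PInj n) : PInj n where
  f x := (α.f x).bind β.f
  mem_bounds := by
    intro x y h
    rcases Option.bind_eq_some_iff.mp h with ⟨z, hz, hzy⟩
    exact ⟨(α.mem_bounds hz).1, (β.mem_bounds hzy).2⟩
  inj := by
    intro x₁ x₂ y h₁ h₂
    rcases Option.bind_eq_some_iff.mp h₁ with ⟨z₁, hz₁, hz₁y⟩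
    rcases Option.bind_eq_some_iff.mp h₂ with ⟨z₂, hz₂, hz₂y⟩
    obtain rfl : z₁ = z₂ := β.inj hz₁y hz₂y
    exact α.inj hz₁ hz₂

/-- The empty transformation `ε`. -/
def epsilon (n : ℕ) : PInj n where
  f _ := none
  mem_bounds := by intro x y h; simp at h
  inj := by intro x₁ x₂ y h; simp at h

/-- The fence (zig-zag) order on `{1, …, n}`: `k ≺ m` iff `|k - m| = 1`, `k` is odd
and `m` is even. -/
def fence (k m : ℕ) : Prop := (m = k + 1 ∨ k = m + 1) ∧ Odd k ∧ Even m

/-- `IOF n` is the set `IOF_n^par` of all partial injections on `{1, …, n}` that are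
order-preserving, parity-preserving, fence-preserving, and whose inverse is also
fence-preserving. -/
def IOF (n : ℕ) : Set (PInj n) :=
  {α | (∀ ⦃x y x' y' : ℕ⦄, α.f x = some x' → α.f y = some y' → x < y → x' < y') ∧
       (∀ ⦃x y : ℕ⦄, α.f x = some y → x % 2 = y % 2) ∧
       (∀ ⦃x y x' y' : ℕ⦄, α.f x = some x' → α.f y = some y' → fence x y → fence x' y') ∧
       (∀ ⦃x y x' y' : ℕ⦄, α.f x = some x' → α.f y = some y' → fence x' y' → fence x y)}

/-- The increasing enumeration of a finite set of naturals. -/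
def sortedList (A : Finset ℕ) : List ℕ := A.sort (· ≤ ·)

/-- The relation `∼` on subsets of `{1, …, n}`:
`A ∼ B` iff `|A| = |B|`, corresponding elements (in increasing order) have the
same parity, and consecutive elements are at distance 1 in `A` iff they are in `B`. -/
def sim (A B : Finset ℕ) : Prop :=
  A.card = B.card ∧
  (∀ (r : ℕ) (hA : r < (sortedList A).length) (hB : r < (sortedList B).length),
    (sortedList A)[r] % 2 = (sortedList B)[r] % 2) ∧
  (∀ (r : ℕ) (hA : r + 1 < (sortedList A).length) (hB : r + 1 < (sortedList B).length),
    ((sortedList A)[r + 1] = (sortedList A)[r] + 1 ↔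
      (sortedList B)[r + 1] = (sortedList B)[r] + 1))

/-- `P ⊆ P(n̄)` is admissible: it contains `∅`, is convex, and is closed under `∼`. -/
def Admissible (n : ℕ) (P : Set (Finset ℕ)) : Prop :=
  (∀ A ∈ P, A ⊆ Finset.Icc 1 n) ∧
  (∅ : Finset ℕ) ∈ P ∧
  (∀ A ∈ P, ∀ B ∈ P, ∀ C : Finset ℕ, A ⊆ C → C ⊆ B → C ∈ P) ∧
  (∀ y ∈ P, ∀ z : Finset ℕ, z ⊆ Finset.Icc 1 n → sim z y → z ∈ P)

/-- `I_X = {α ∈ IOF_n^par : dom(α) ∈ X}`. -/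
def IX (n : ℕ) (X : Set (Finset ℕ)) : Set (PInj n) :=
  {α | α ∈ IOF n ∧ α.dom ∈ X}

/-- An ideal of the monoid `IOF_n^par`. -/
def IsIdeal (n : ℕ) (I : Set (PInj n)) : Prop :=
  I.Nonempty ∧ I ⊆ IOF n ∧ ∀ a ∈ I, ∀ b ∈ IOF n, a.comp b ∈ I ∧ b.comp a ∈ I

/-- `del y t` is `y^[t+1]` in the paper's (1-based) notation: `y` with its `t`-th
smallest element removed (`t` being 0-based here). -/
def del (y : Finset ℕ) (t : ℕ) : Finset ℕ := y.erase ((sortedList y).getD t 0)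

/-- `x ⊑ y`: `x` is obtained from `y` by removing one element. -/
def sqsub (x y : Finset ℕ) : Prop := ∃ t < y.card, x = del y t

/-- `A_Γ = {Δ ∈ P : Δ ∼ Γ}`. -/
def Aset (P : Set (Finset ℕ)) (Γ : Finset ℕ) : Set (Finset ℕ) :=
  {Δ ∈ P | sim Δ Γ}

/-- `B_Γ = {Δ^[t] : Δ ∈ A_Γ, t ∈ {1,…,|Δ|}}`. -/
def Bset (P : Set (Finset ℕ)) (Γ : Finset ℕ) : Set (Finset ℕ) :=
  {D | ∃ Δ ∈ Aset P Γ, ∃ t < Δ.card, D = del Δ t}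

/-- `B = {B_Γ : Γ ∈ P, |Γ| ≥ 2, |A_Γ| ≥ 2}`. -/
def Bfam (P : Set (Finset ℕ)) : Set (Set (Finset ℕ)) :=
  {E | ∃ Γ ∈ P, 2 ≤ Γ.card ∧ 2 ≤ (Aset P Γ).ncard ∧ E = Bset P Γ}

/-- `C = {{g} : g ∈ P, (g ⊑ y for some y ∈ P with y ≁ z for all z ∈ P \ {y}) or
(g ⋢ z for all z ∈ P)}`. -/
def Cfam (P : Set (Finset ℕ)) : Set (Set (Finset ℕ)) :=
  {D | ∃ g ∈ P, D = {g} ∧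
    ((∃ y ∈ P, sqsub g y ∧ ∀ z ∈ P, z ≠ y → ¬ sim y z) ∨ (∀ z ∈ P, ¬ sqsub g z))}

/-- `BC_{Δ₁} = {Δ ∈ B ∪ C : x ∼ y for all x ∈ Δ, y ∈ Δ₁}`. -/
def BCset (P : Set (Finset ℕ)) (Δ₁ : Set (Finset ℕ)) : Set (Set (Finset ℕ)) :=
  {Δ ∈ Bfam P ∪ Cfam P | ∀ x ∈ Δ, ∀ y ∈ Δ₁, sim x y}

/-- `T_Δ = {c ∈ I_P : dom(c) ∈ Δ, im(c) ∈ Δ}`. -/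
def Tset (n : ℕ) (P : Set (Finset ℕ)) (Δ : Set (Finset ℕ)) : Set (PInj n) :=
  {c ∈ IX n P | c.dom ∈ Δ ∧ c.im ∈ Δ}

/-- `T_Q` for a pair `Q = (Q₁, Q₂)`. -/
def TQ (n : ℕ) (P : Set (Finset ℕ)) (Q₁ Q₂ : Set (Set (Finset ℕ))) : Set (PInj n) :=
  {c ∈ IX n P | (∃ Δ ∈ Q₁, c.dom ∈ Δ) ∧ (∃ Δ ∈ Q₂, c.im ∈ Δ)}

/-- `I_P^u`: the elements of `I_P` that are not expressible in the special product form. -/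
def Iu (n : ℕ) (P : Set (Finset ℕ)) : Set (PInj n) :=
  {α ∈ IX n P | ¬ ∃ y₁ ∈ P, ∃ z₁ ∈ P, ∃ y₂ ∈ P, ∃ z₂ ∈ P, ∃ r < y₁.card, ∃ s < y₁.card,
    y₁.card = z₁.card ∧ 2 ≤ y₁.card ∧
    sim y₂ y₁ ∧ sim z₂ z₁ ∧
    del y₁ r = y₁ ∩ z₁ ∧ del z₁ s = y₁ ∩ z₁ ∧
    sim (del y₂ r) (del z₂ s) ∧ sim (del z₂ s) (y₁ ∩ z₁) ∧
    α.dom = del y₂ r ∧ α.im = del z₂ s}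

/-- `T` is a subsemigroup of `S` (a subset of `S` closed under composition). -/
def IsSubsemigroup (n : ℕ) (S T : Set (PInj n)) : Prop :=
  T ⊆ S ∧ ∀ a ∈ T, ∀ b ∈ T, a.comp b ∈ T

/-- `T` is a maximal subsemigroup of `S`. -/
def IsMaxSubsemigroup (n : ℕ) (S T : Set (PInj n)) : Prop :=
  IsSubsemigroup n S T ∧ T ≠ S ∧
  ∀ U : Set (PInj n), IsSubsemigroup n S U → T ⊆ U → U ⊆ S → U = T ∨ U = S

/-- The left "translate set" `Ma` in the monoid `M = IOF_n^par`. -/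
def lset (n : ℕ) (a : PInj n) : Set (PInj n) := {c | ∃ m ∈ IOF n, m.comp a = c}

/-- The right "translate set" `aM` in the monoid `M = IOF_n^par`. -/
def rset (n : ℕ) (a : PInj n) : Set (PInj n) := {c | ∃ m ∈ IOF n, a.comp m = c}

/-- The two-sided "translate set" `MaM` in the monoid `M = IOF_n^par`. -/
def jset (n : ℕ) (a : PInj n) : Set (PInj n) :=
  {c | ∃ m₁ ∈ IOF n, ∃ m₂ ∈ IOF n, (m₁.comp a).comp m₂ = c}

/-!
Left and right multiplication by elements of `IOF_n^par` move domains around inside an ideal: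
precomposing with the partial identity on `C ⊆ dom a` cuts the domain down to `C`, and
precomposing with the order isomorphism `z → dom a` (which lies in `IOF_n^par` exactly when
`z ∼ dom a`) replaces the domain by `z`. Conversely, if `dom α = dom a` with `a ∈ I`, then
`α = (a a⁻¹) α ∈ I`, since `a a⁻¹` is the partial identity on `dom a`.
-/

namespace PInj

variable {n : ℕ}

theorem ext_of_f_eq_some {α β : PInj n} (h : ∀ x y, α.f x = some y ↔ β.f x = some y) :
    α = β := by
  obtain ⟨f, _, _⟩ := α
  obtain ⟨g, _, _⟩ := β
  obtain rfl : f = g := funext fun x => Option.ext (h x)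
  rfl

theorem mem_dom {α : PInj n} {x : ℕ} : x ∈ α.dom ↔ ∃ y, α.f x = some y := by
  simp only [dom, Finset.mem_filter, Option.isSome_iff_exists, and_iff_right_iff_imp]
  rintro ⟨y, hy⟩
  exact (α.mem_bounds hy).1

theorem dom_subset (α : PInj n) : α.dom ⊆ Finset.Icc 1 n :=
  Finset.filter_subset _ _

theorem comp_f_eq_some {α β : PInj n} {x z : ℕ} :
    (α.comp β).f x = some z ↔ ∃ y, α.f x = some y ∧ β.f y = some z :=
  Option.bind_eq_some_iff

theorem dom_comp_of_maps_to {α β : PInj n} (h : ∀ ⦃x y⦄, α.f x = some y → y ∈ β.dom) :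
    (α.comp β).dom = α.dom := by
  ext x
  simp only [mem_dom, comp_f_eq_some]
  constructor
  · rintro ⟨z, y, hy, -⟩
    exact ⟨y, hy⟩
  · rintro ⟨y, hy⟩
    obtain ⟨z, hz⟩ := mem_dom.mp (h hy)
    exact ⟨z, y, hy, hz⟩

end PInj

open PInj

section PartialIdentity

def idOn (n : ℕ) (C : Finset ℕ) : PInj n where
  f x := if x ∈ C ∧ x ∈ Finset.Icc 1 n then some x else none
  mem_bounds := by
    intro x y h
    split_ifs at h with hx
    cases h
    exact ⟨hx.2, hx.2⟩
  inj := by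
    intro x₁ x₂ y h₁ h₂
    split_ifs at h₁ h₂
    cases h₁
    cases h₂
    rfl

variable {n : ℕ}

theorem idOn_f_eq_some {C : Finset ℕ} {x y : ℕ} :
    (idOn n C).f x = some y ↔ x = y ∧ x ∈ C ∧ x ∈ Finset.Icc 1 n := by
  simp only [idOn, Option.ite_none_right_eq_some, Option.some.injEq]
  tauto

theorem idOn_mem_IOF (C : Finset ℕ) : idOn n C ∈ IOF n := by
  refine ⟨?_, ?_, ?_, ?_⟩ <;>
  · intro x y
    simp +contextual [idOn_f_eq_some]

theorem dom_idOn_comp (C : Finset ℕ) (α : PInj n) : ((idOn n C).comp α).dom = C ∩ α.dom := by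
  ext x
  simp only [mem_dom, comp_f_eq_some, idOn_f_eq_some, Finset.mem_inter]
  constructor
  · rintro ⟨z, _, ⟨rfl, hC, -⟩, hz⟩
    exact ⟨hC, z, hz⟩
  · rintro ⟨hC, z, hz⟩
    exact ⟨z, x, ⟨rfl, hC, (α.mem_bounds hz).1⟩, hz⟩

theorem idOn_dom_comp (α : PInj n) : (idOn n α.dom).comp α = α := by
  refine ext_of_f_eq_some fun x z => ?_
  simp only [comp_f_eq_some, idOn_f_eq_some]
  constructor
  · rintro ⟨_, ⟨rfl, -⟩, hz⟩
    exact hz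
  · intro hz
    exact ⟨x, ⟨rfl, mem_dom.mpr ⟨z, hz⟩, (α.mem_bounds hz).1⟩, hz⟩

end PartialIdentity

section Inverse

variable {n : ℕ}

open Classical in
noncomputable def invFun (α : PInj n) (y : ℕ) : Option ℕ :=
  if h : ∃ x, α.f x = some y then some h.choose else none

theorem invFun_eq_some {α : PInj n} {x y : ℕ} : invFun α y = some x ↔ α.f x = some y := by
  unfold invFun
  split_ifs with h
  · rw [Option.some.injEq]
    exact ⟨fun hx => hx ▸ h.choose_spec, fun hx => α.inj h.choose_spec hx⟩
  · simp only [false_iff]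
    exact fun hx => h ⟨x, hx⟩

noncomputable def PInj.inv (α : PInj n) : PInj n where
  f := invFun α
  mem_bounds _ _ h := (α.mem_bounds (invFun_eq_some.mp h)).symm
  inj _ _ _ h₁ h₂ := Option.some.inj ((invFun_eq_some.mp h₁).symm.trans (invFun_eq_some.mp h₂))

theorem PInj.inv_f_eq_some {α : PInj n} {x y : ℕ} : α.inv.f y = some x ↔ α.f x = some y :=
  invFun_eq_some

theorem PInj.inv_mem_IOF {α : PInj n} (hα : α ∈ IOF n) : α.inv ∈ IOF n := by
  obtain ⟨hmono, hpar, hfence, hfence_inv⟩ := hα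
  refine ⟨fun x y x' y' hx hy hxy => ?_, fun x y h => ?_,
    fun x y x' y' hx hy h => ?_, fun x y x' y' hx hy h => ?_⟩ <;>
    rw [PInj.inv_f_eq_some] at *
  · refine lt_of_not_ge fun hyx => ?_
    rcases hyx.lt_or_eq with hyx | rfl
    · exact (hmono hy hx hyx).not_gt hxy
    · exact hxy.ne (Option.some.inj (hx.symm.trans hy))
  · exact (hpar h).symm
  · exact hfence_inv hx hy h
  · exact hfence hx hy h

theorem PInj.comp_inv (α : PInj n) : α.comp α.inv = idOn n α.dom := by
  refine ext_of_f_eq_some fun x z => ?_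
  simp only [comp_f_eq_some, inv_f_eq_some, idOn_f_eq_some]
  constructor
  · rintro ⟨y, hy, hz⟩
    obtain rfl := α.inj hy hz
    exact ⟨rfl, mem_dom.mpr ⟨y, hy⟩, (α.mem_bounds hy).1⟩
  · rintro ⟨rfl, hx, -⟩
    obtain ⟨y, hy⟩ := mem_dom.mp hx
    exact ⟨y, hy, hy⟩

end Inverse

section SortedList

theorem sortedList_sortedLT (A : Finset ℕ) : (sortedList A).SortedLT :=
  Finset.sortedLT_sort A

theorem mem_sortedList {A : Finset ℕ} {x : ℕ} : x ∈ sortedList A ↔ x ∈ A :=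
  Finset.mem_sort _

theorem length_sortedList (A : Finset ℕ) : (sortedList A).length = A.card :=
  Finset.length_sort _

theorem getElem_sortedList_mem {A : Finset ℕ} {i : ℕ} (hi : i < (sortedList A).length) :
    (sortedList A)[i] ∈ A :=
  mem_sortedList.mp (List.getElem_mem hi)

theorem index_eq_add_one_of_getElem_eq_add_one {l : List ℕ} (hl : l.SortedLT) {i j : ℕ}
    {hi : i < l.length} {hj : j < l.length} (h : l[j] = l[i] + 1) : j = i + 1 := by
  have hij : i < j := hl.getElem_lt_getElem_iff.mp (by omega)
  by_contra hne
  have hlt₁ : l[i] < l[i + 1] := hl.getElem_lt_getElem_iff.mpr (Nat.lt_succ_self i)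
  have hlt₂ : l[i + 1] < l[j] := hl.getElem_lt_getElem_iff.mpr (by omega)
  omega

theorem sim_symm {A B : Finset ℕ} (h : sim A B) : sim B A := by
  obtain ⟨hcard, hpar, hgap⟩ := h
  exact ⟨hcard.symm, fun r hB hA => (hpar r hA hB).symm, fun r hB hA => (hgap r hA hB).symm⟩

theorem fence_getElem_of_sim {A B : Finset ℕ} (h : sim A B) {i j : ℕ}
    {hiA : i < (sortedList A).length} {hjA : j < (sortedList A).length}
    (hiB : i < (sortedList B).length) (hjB : j < (sortedList B).length)
    (hf : fence (sortedList A)[i] (sortedList A)[j]) :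
    fence (sortedList B)[i] (sortedList B)[j] := by
  obtain ⟨-, hpar, hgap⟩ := h
  obtain ⟨hadj, hodd, heven⟩ := hf
  have hpi := hpar i hiA hiB
  have hpj := hpar j hjA hjB
  refine ⟨?_, Nat.odd_iff.mpr (by rw [← hpi, ← Nat.odd_iff]; exact hodd),
    Nat.even_iff.mpr (by rw [← hpj, ← Nat.even_iff]; exact heven)⟩
  rcases hadj with hadj | hadj
  · obtain rfl := index_eq_add_one_of_getElem_eq_add_one (sortedList_sortedLT A) hadj
    exact Or.inl ((hgap i hjA hjB).mp hadj)
  · obtain rfl := index_eq_add_one_of_getElem_eq_add_one (sortedList_sortedLT A) hadj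
    exact Or.inr ((hgap j hiA hiB).mp hadj)

end SortedList

section Matching

def matchingFun (z y : Finset ℕ) (x : ℕ) : Option ℕ :=
  if x ∈ z then (sortedList y)[(sortedList z).idxOf x]? else none

theorem matchingFun_eq_some {z y : Finset ℕ} {x w : ℕ} :
    matchingFun z y x = some w ↔ ∃ i, ∃ (hiz : i < (sortedList z).length)
      (hiy : i < (sortedList y).length), (sortedList z)[i] = x ∧ (sortedList y)[i] = w := by
  unfold matchingFun
  constructor
  · intro h
    split_ifs at h with hx
    obtain ⟨hiy, hw⟩ := List.getElem?_eq_some_iff.mp h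
    exact ⟨_, List.idxOf_lt_length_iff.mpr (mem_sortedList.mpr hx), hiy,
      List.getElem_idxOf _, hw⟩
  · rintro ⟨i, hiz, hiy, rfl, rfl⟩
    rw [if_pos (getElem_sortedList_mem hiz),
      (sortedList_sortedLT z).nodup.idxOf_getElem]
    exact List.getElem?_eq_getElem hiy


/-- The increasing bijection from `z` onto `y` when `|z| = |y|`; in general it matches the
`min |z| |y|` smallest elements of both sets. -/
def matching (n : ℕ) (z y : Finset ℕ) (hz : z ⊆ Finset.Icc 1 n) (hy : y ⊆ Finset.Icc 1 n) :
    PInj n where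
  f := matchingFun z y
  mem_bounds := by
    intro x w h
    obtain ⟨i, hiz, hiy, rfl, rfl⟩ := matchingFun_eq_some.mp h
    exact ⟨hz (getElem_sortedList_mem hiz), hy (getElem_sortedList_mem hiy)⟩
  inj := by
    intro x₁ x₂ w h₁ h₂
    obtain ⟨i, hiz, hiy, rfl, rfl⟩ := matchingFun_eq_some.mp h₁
    obtain ⟨j, hjz, hjy, rfl, hj⟩ := matchingFun_eq_some.mp h₂
    obtain rfl : j = i := (sortedList_sortedLT y).nodup.getElem_inj_iff.mp hj
    rfl

variable {n : ℕ} {z y : Finset ℕ} {hz : z ⊆ Finset.Icc 1 n} {hy : y ⊆ Finset.Icc 1 n}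

theorem matching_maps_to {x w : ℕ} (h : (matching n z y hz hy).f x = some w) : w ∈ y := by
  obtain ⟨i, -, hiy, -, rfl⟩ := matchingFun_eq_some.mp h
  exact getElem_sortedList_mem hiy

theorem dom_matching (hcard : z.card ≤ y.card) : (matching n z y hz hy).dom = z := by
  ext x
  rw [mem_dom]
  constructor
  · rintro ⟨w, hw⟩
    obtain ⟨i, hiz, -, rfl, -⟩ := matchingFun_eq_some.mp hw
    exact getElem_sortedList_mem hiz
  · intro hx
    have hiz := List.idxOf_lt_length_iff.mpr (mem_sortedList.mpr hx)
    have hiy : (sortedList z).idxOf x < (sortedList y).length := by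
      rw [length_sortedList] at hiz ⊢
      omega
    exact ⟨_, matchingFun_eq_some.mpr ⟨_, hiz, hiy, List.getElem_idxOf _, rfl⟩⟩

theorem matching_mem_IOF (hsim : sim z y) : matching n z y hz hy ∈ IOF n := by
  refine ⟨fun x₁ x₂ w₁ w₂ h₁ h₂ hlt => ?_, fun x w h => ?_,
    fun x₁ x₂ w₁ w₂ h₁ h₂ hf => ?_, fun x₁ x₂ w₁ w₂ h₁ h₂ hf => ?_⟩
  · obtain ⟨i, hiz, hiy, rfl, rfl⟩ := matchingFun_eq_some.mp h₁
    obtain ⟨j, hjz, hjy, rfl, rfl⟩ := matchingFun_eq_some.mp h₂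
    exact (sortedList_sortedLT y).getElem_lt_getElem_iff.mpr
      ((sortedList_sortedLT z).getElem_lt_getElem_iff.mp hlt)
  · obtain ⟨i, hiz, hiy, rfl, rfl⟩ := matchingFun_eq_some.mp h
    exact hsim.2.1 i hiz hiy
  · obtain ⟨i, hiz, hiy, rfl, rfl⟩ := matchingFun_eq_some.mp h₁
    obtain ⟨j, hjz, hjy, rfl, rfl⟩ := matchingFun_eq_some.mp h₂
    exact fence_getElem_of_sim hsim hiy hjy hf
  · obtain ⟨i, hiz, hiy, rfl, rfl⟩ := matchingFun_eq_some.mp h₁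
    obtain ⟨j, hjz, hjy, rfl, rfl⟩ := matchingFun_eq_some.mp h₂
    exact fence_getElem_of_sim (sim_symm hsim) hiz hjz hf

end Matching

namespace IsIdeal

variable {n : ℕ} {I : Set (PInj n)} {a : PInj n}

theorem exists_dom_eq_of_subset (hI : IsIdeal n I) (ha : a ∈ I) {C : Finset ℕ}
    (hC : C ⊆ a.dom) : ∃ b ∈ I, b.dom = C :=
  ⟨(idOn n C).comp a, (hI.2.2 a ha _ (idOn_mem_IOF C)).2,
    by rw [dom_idOn_comp, Finset.inter_eq_left.mpr hC]⟩

theorem exists_dom_eq_of_sim (hI : IsIdeal n I) (ha : a ∈ I) {z : Finset ℕ}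
    (hz : z ⊆ Finset.Icc 1 n) (hsim : sim z a.dom) : ∃ b ∈ I, b.dom = z :=
  ⟨(matching n z a.dom hz a.dom_subset).comp a, (hI.2.2 a ha _ (matching_mem_IOF hsim)).2,
    by rw [dom_comp_of_maps_to fun _ _ => matching_maps_to, dom_matching hsim.1.le]⟩

theorem mem_of_dom_eq (hI : IsIdeal n I) (ha : a ∈ I) {α : PInj n} (hα : α ∈ IOF n)
    (hdom : α.dom = a.dom) : α ∈ I := by
  have hid : idOn n α.dom ∈ I := by
    rw [hdom, ← a.comp_inv]
    exact (hI.2.2 a ha _ (inv_mem_IOF (hI.2.1 ha))).1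
  simpa only [idOn_dom_comp] using (hI.2.2 _ hid α hα).1

end IsIdeal

theorem statement_8_general (n : ℕ) (I : Set (PInj n)) (hI : IsIdeal n I) :
    Admissible n {A | ∃ a ∈ I, PInj.dom a = A} ∧
      I = IX n {A | ∃ a ∈ I, PInj.dom a = A} := by
  obtain ⟨a, ha⟩ := hI.1
  refine ⟨⟨?_, ?_, ?_, ?_⟩, ?_⟩
  · rintro A ⟨b, -, rfl⟩
    exact b.dom_subset
  · exact hI.exists_dom_eq_of_subset ha (Finset.empty_subset _)
  · rintro A - B ⟨b, hb, rfl⟩ C - hCB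
    exact hI.exists_dom_eq_of_subset hb hCB
  · rintro y ⟨b, hb, rfl⟩ z hz hsim
    exact hI.exists_dom_eq_of_sim hb hz hsim
  · ext α
    exact ⟨fun hα => ⟨hI.2.1 hα, α, hα, rfl⟩,
      fun ⟨hα, b, hb, hdom⟩ => hI.mem_of_dom_eq hb hα hdom.symm⟩

/-- Every ideal `I` of `IOF_n^par` equals `I_{P*}` for the
admissible set `P* = {dom(a) : a ∈ I}`. -/
theorem statement_8 (n : ℕ) (hn : 0 < n) (I : Set (PInj n)) (hI : IsIdeal n I) :
    Admissible n {A | ∃ a ∈ I, PInj.dom a = A} ∧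
      I = IX n {A | ∃ a ∈ I, PInj.dom a = A} :=
  statement_8_general n I hI

end IOFpar
end

section
/- Let P* ⊆ P(n̄) be admissible, let J be a maximal subsemigroup of I_{P*} and let α ∈ I_{P*} with α ∉ J. Then every β ∈ I_{P*} with rank(β) ≠ rank(α) satisfies β ∈ J. -/
namespace IOFpar

/-
Adjoining an element `α ∉ J` to a maximal subsemigroup `J` of `I_{P*}` generates all of
`I_{P*}`. Since the rank of a product is at most the rank of each factor, the elements of
`J` together with those of rank at most `rank α` already form a subsemigroup containing `J`
and `α`; hence every `β ∉ J` has `rank β ≤ rank α`. Exchanging the roles of `α` and `β`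
gives equality of ranks.
-/

namespace PInj

variable {n : ℕ}

lemma mem_dom_iff (α : PInj n) (x : ℕ) : x ∈ α.dom ↔ ∃ y, α.f x = some y := by
  simp only [dom, Finset.mem_filter, Option.isSome_iff_exists, and_iff_right_iff_imp]
  exact fun ⟨_, hy⟩ => (α.mem_bounds hy).1

lemma dom_comp_subset (α β : PInj n) : (α.comp β).dom ⊆ α.dom := by
  intro x hx
  obtain ⟨_, hxz⟩ := (mem_dom_iff _ x).1 hx
  obtain ⟨y, hxy, _⟩ := Option.bind_eq_some_iff.1 hxz
  exact (mem_dom_iff α x).2 ⟨y, hxy⟩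

lemma rank_comp_le_left (α β : PInj n) : (α.comp β).rank ≤ α.rank :=
  Finset.card_le_card (dom_comp_subset α β)

lemma rank_comp_le_right (α β : PInj n) : (α.comp β).rank ≤ β.rank := by
  have comp_some : ∀ x ∈ (α.comp β).dom, ∃ y, α.f x = some y ∧ y ∈ β.dom := by
    intro x hx
    obtain ⟨_, hxz⟩ := (mem_dom_iff _ x).1 hx
    obtain ⟨y, hxy, hyz⟩ := Option.bind_eq_some_iff.1 hxz
    exact ⟨y, hxy, (mem_dom_iff β y).2 ⟨_, hyz⟩⟩
  refine Finset.card_le_card_of_injOn α.app (fun x hx => ?_) (fun x₁ hx₁ x₂ hx₂ happ => ?_)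
  · obtain ⟨y, hxy, hy⟩ := comp_some x hx
    simpa only [Finset.mem_coe, app, hxy, Option.getD_some] using hy
  · obtain ⟨y₁, hxy₁, _⟩ := comp_some x₁ hx₁
    obtain ⟨y₂, hxy₂, _⟩ := comp_some x₂ hx₂
    simp only [app, hxy₁, hxy₂, Option.getD_some] at happ
    exact α.inj hxy₁ (happ ▸ hxy₂)

end PInj

lemma comp_mem_IOF {n : ℕ} {α β : PInj n} (hα : α ∈ IOF n) (hβ : β ∈ IOF n) :
    α.comp β ∈ IOF n := by
  obtain ⟨hα_order, hα_parity, hα_fence, hα_fence_inv⟩ := hα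
  obtain ⟨hβ_order, hβ_parity, hβ_fence, hβ_fence_inv⟩ := hβ
  refine ⟨fun x y x' y' hx hy hxy => ?_, fun x y hx => ?_,
    fun x y x' y' hx hy hxy => ?_, fun x y x' y' hx hy hxy => ?_⟩ <;>
  obtain ⟨u, hu, hux⟩ := Option.bind_eq_some_iff.1 hx
  · obtain ⟨v, hv, hvy⟩ := Option.bind_eq_some_iff.1 hy
    exact hβ_order hux hvy (hα_order hu hv hxy)
  · exact (hα_parity hu).trans (hβ_parity hux)
  · obtain ⟨v, hv, hvy⟩ := Option.bind_eq_some_iff.1 hy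
    exact hβ_fence hux hvy (hα_fence hu hv hxy)
  · obtain ⟨v, hv, hvy⟩ := Option.bind_eq_some_iff.1 hy
    exact hα_fence_inv hu hv (hβ_fence_inv hux hvy hxy)

lemma comp_mem_IX {n : ℕ} {P : Set (Finset ℕ)} (hP : Admissible n P) {α β : PInj n}
    (hα : α ∈ IX n P) (hβ : β ∈ IX n P) : α.comp β ∈ IX n P :=
  ⟨comp_mem_IOF hα.1 hβ.1, hP.2.2.1 ∅ hP.2.1 α.dom hα.2 _ (Finset.empty_subset _)
    (PInj.dom_comp_subset α β)⟩

lemma IsMaxSubsemigroup.rank_le_of_notMem {n : ℕ} {S J : Set (PInj n)}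
    (hS : ∀ α ∈ S, ∀ β ∈ S, α.comp β ∈ S) (hJ : IsMaxSubsemigroup n S J)
    {α : PInj n} (hα : α ∈ S) (hαJ : α ∉ J) {β : PInj n} (hβ : β ∈ S) (hβJ : β ∉ J) :
    β.rank ≤ α.rank := by
  let U : Set (PInj n) := {γ ∈ S | γ ∈ J ∨ γ.rank ≤ α.rank}
  have hU : IsSubsemigroup n S U := by
    refine ⟨fun γ hγ => hγ.1, fun γ hγ δ hδ => ⟨hS γ hγ.1 δ hδ.1, ?_⟩⟩
    rcases hγ.2 with hγJ | hγα
    · rcases hδ.2 with hδJ | hδα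
      · exact Or.inl (hJ.1.2 γ hγJ δ hδJ)
      · exact Or.inr ((PInj.rank_comp_le_right γ δ).trans hδα)
    · exact Or.inr ((PInj.rank_comp_le_left γ δ).trans hγα)
  have hJU : J ⊆ U := fun γ hγ => ⟨hJ.1.1 hγ, Or.inl hγ⟩
  rcases hJ.2.2 U hU hJU hU.1 with hUJ | hUS
  · exact absurd (hUJ ▸ ⟨hα, Or.inr le_rfl⟩ : α ∈ J) hαJ
  · exact ((hUS ▸ hβ : β ∈ U).2.resolve_left hβJ)

theorem statement_12_general (n : ℕ) (P : Set (Finset ℕ)) (hP : Admissible n P)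
    (J : Set (PInj n)) (hJ : IsMaxSubsemigroup n (IX n P) J)
    (α : PInj n) (hα : α ∈ IX n P) (hαJ : α ∉ J)
    (β : PInj n) (hβ : β ∈ IX n P) (hrank : β.rank ≠ α.rank) : β ∈ J := by
  by_contra hβJ
  have hS : ∀ γ ∈ IX n P, ∀ δ ∈ IX n P, γ.comp δ ∈ IX n P :=
    fun _ hγ _ hδ => comp_mem_IX hP hγ hδ
  exact hrank (le_antisymm (hJ.rank_le_of_notMem hS hα hαJ hβ hβJ)
    (hJ.rank_le_of_notMem hS hβ hβJ hα hαJ))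

/-- If `J` is a maximal subsemigroup of `I_{P*}` and `α ∉ J`,
then every `β ∈ I_{P*}` with `rank(β) ≠ rank(α)` lies in `J`. -/
theorem statement_12 (n : ℕ) (hn : 0 < n) (P : Set (Finset ℕ)) (hP : Admissible n P)
    (J : Set (PInj n)) (hJ : IsMaxSubsemigroup n (IX n P) J)
    (α : PInj n) (hα : α ∈ IX n P) (hαJ : α ∉ J)
    (β : PInj n) (hβ : β ∈ IX n P) (hrank : β.rank ≠ α.rank) : β ∈ J :=
  statement_12_general n P hP J hJ α hα hαJ β hβ hrank

end IOFpar
end
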